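/- For all positive integers n, r, a and all p ∈ [0,1], the probability that the bipartite graph H_f of a random Boolean function f with parameter p (|X| = |Y| = n) simultaneously has no cross-free matching of size a (i.e., ν×(H_f) < a) and has a matching of size at least r (i.e., ν(H_f) ≥ r), is at most the probability that the Erdős–Rényi random graph G_{r,p²} on r vertices with edge probability p² has no independent set of size a (i.e., α(G_{r,p²}) < a). -/

import Mathlib

open MeasureTheory Filter
open scoped Classical ENNReal NNReal

/-- Bernoulli measure on `Bool` with parameter `p` (clamped to `[0,1]`). -/
noncomputable def bern (p : ℝ) : Measure Bool :=
  (PMF.bernoulli (min (Real.toNNReal p) 1) (min_le_right _ _)).toMeasure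

instance bern.isProbabilityMeasure (p : ℝ) : IsProbabilityMeasure (bern p) := by
  unfold bern; infer_instance

/-- The law of a random Boolean function `f : [n] × [n] → Bool` with i.i.d.
Bernoulli(p) entries. -/
noncomputable def rbf (n : ℕ) (p : ℝ) : Measure ((Fin n × Fin n) → Bool) :=
  Measure.pi fun _ => bern p

/-- Erdős–Rényi random graph on `m` vertices, encoded by edge indicators on
ordered pairs `i < j`. -/
noncomputable def erg (m : ℕ) (q : ℝ) :
    Measure ({e : Fin m × Fin m // e.1 < e.2} → Bool) :=
  Measure.pi fun _ => bern q

def IsOneRect {n : ℕ} (f : (Fin n × Fin n) → Bool) (A B : Finset (Fin n)) : Prop :=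
  ∀ x ∈ A, ∀ y ∈ B, f (x, y) = true

/-- Size of the largest 1-rectangle of `f`. -/
noncomputable def onerec {n : ℕ} (f : (Fin n × Fin n) → Bool) : ℕ :=
  sSup {s | ∃ A B : Finset (Fin n), IsOneRect f A B ∧ s = A.card * B.card}

/-- Size of the 1-rectangle of `f` generated by the row set `K`. -/
noncomputable def rowGenSize {n : ℕ} (f : (Fin n × Fin n) → Bool) (K : Finset (Fin n)) : ℕ :=
  K.card * (Finset.univ.filter (fun y => ∀ x ∈ K, f (x, y) = true)).card

/-- Size of the 1-rectangle of `f` generated by the column set `L`. -/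
noncomputable def colGenSize {n : ℕ} (f : (Fin n × Fin n) → Bool) (L : Finset (Fin n)) : ℕ :=
  (Finset.univ.filter (fun x => ∀ y ∈ L, f (x, y) = true)).card * L.card

def IsFoolingSet {n : ℕ} (f : (Fin n × Fin n) → Bool) (F : Finset (Fin n × Fin n)) : Prop :=
  (∀ e ∈ F, f e = true) ∧
  ∀ e ∈ F, ∀ e' ∈ F, e ≠ e' → f (e.1, e'.2) = false ∨ f (e'.1, e.2) = false

/-- Maximum size of a fooling set of `f`. -/
noncomputable def fool {n : ℕ} (f : (Fin n × Fin n) → Bool) : ℕ :=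
  sSup {k | ∃ F : Finset (Fin n × Fin n), IsFoolingSet f F ∧ F.card = k}

/-- `F` is a matching in the bipartite graph `H_f`. -/
def IsMatchingIn {n : ℕ} (f : (Fin n × Fin n) → Bool) (F : Finset (Fin n × Fin n)) : Prop :=
  (∀ e ∈ F, f e = true) ∧
  ∀ e ∈ F, ∀ e' ∈ F, e ≠ e' → e.1 ≠ e'.1 ∧ e.2 ≠ e'.2

/-- Maximum size `ν(H_f)` of a matching in the bipartite graph `H_f`. -/
noncomputable def matchNum {n : ℕ} (f : (Fin n × Fin n) → Bool) : ℕ :=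
  sSup {k | ∃ F : Finset (Fin n × Fin n), IsMatchingIn f F ∧ F.card = k}

/-- Maximum size `ν×(H_f)` of a cross-free matching in `H_f`. -/
noncomputable def crossFreeMatchNum {n : ℕ} (f : (Fin n × Fin n) → Bool) : ℕ :=
  sSup {k | ∃ F : Finset (Fin n × Fin n),
    (IsMatchingIn f F ∧
      ∀ e ∈ F, ∀ e' ∈ F, e ≠ e' → f (e.1, e'.2) = false ∨ f (e'.1, e.2) = false) ∧
    F.card = k}

/-- `R` is a (1-)cover of `f` by 1-rectangles. -/
def IsCover {n : ℕ} (f : (Fin n × Fin n) → Bool)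
    (R : Finset (Finset (Fin n) × Finset (Fin n))) : Prop :=
  (∀ r ∈ R, IsOneRect f r.1 r.2) ∧
  ∀ x y : Fin n, f (x, y) = true → ∃ r ∈ R, x ∈ r.1 ∧ y ∈ r.2

/-- The cover number `rc(f)`. -/
noncomputable def coverNum {n : ℕ} (f : (Fin n × Fin n) → Bool) : ℕ :=
  sInf {k | ∃ R, IsCover f R ∧ R.card = k}

/-- The fractional cover number `frc(f)`: the infimum over probability
distributions `w` on 1-rectangles of the maximum over 1-entries `e` of the
reciprocal of the probability that a random rectangle covers `e`. -/
noncomputable def frc {n : ℕ} (f : (Fin n × Fin n) → Bool) : ℝ≥0∞ :=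
  ⨅ (w : (Finset (Fin n) × Finset (Fin n)) → ℝ≥0) (_ : ∑ r, w r = 1)
    (_ : ∀ r, w r ≠ 0 → IsOneRect f r.1 r.2),
    ⨆ (e : Fin n × Fin n) (_ : f e = true),
      ((∑ r ∈ Finset.univ.filter (fun r : Finset (Fin n) × Finset (Fin n) =>
          e.1 ∈ r.1 ∧ e.2 ∈ r.2), w r : ℝ≥0) : ℝ≥0∞)⁻¹

def IsIndepSet {m : ℕ} (g : {e : Fin m × Fin m // e.1 < e.2} → Bool)
    (A : Finset (Fin m)) : Prop :=
  ∀ i ∈ A, ∀ j ∈ A, ∀ h : i < j, g ⟨(i, j), h⟩ = false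

/-- The independence number `α` of a graph given by edge indicators. -/
noncomputable def indepNum {m : ℕ} (g : {e : Fin m × Fin m // e.1 < e.2} → Bool) : ℕ :=
  sSup {k | ∃ A : Finset (Fin m), IsIndepSet g A ∧ A.card = k}

/-- The number of distinct rows of `f` viewed as a matrix. -/
noncomputable def numDistinctRows {n : ℕ} (f : (Fin n × Fin n) → Bool) : ℕ :=
  (Finset.univ.image fun x : Fin n => fun y : Fin n => f (x, y)).card

/-- The number of distinct non-zero rows of `f` viewed as a matrix. -/
noncomputable def numDistinctNonzeroRows {n : ℕ} (f : (Fin n × Fin n) → Bool) : ℕ :=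
  ((Finset.univ.image fun x : Fin n => fun y : Fin n => f (x, y)).filter
    fun r => ∃ y, r y = true).card

/-- Number of ones in row `x`. -/
noncomputable def rowOnes {n : ℕ} (f : (Fin n × Fin n) → Bool) (x : Fin n) : ℕ :=
  (Finset.univ.filter fun y => f (x, y) = true).card

/-- Number of ones in column `y`. -/
noncomputable def colOnes {n : ℕ} (f : (Fin n × Fin n) → Bool) (y : Fin n) : ℕ :=
  (Finset.univ.filter fun x => f (x, y) = true).card

/-- `argmax_{b ∈ {⌊log_{1/p} e⌋, ⌈log_{1/p} e⌉}} b·pᵇ`. -/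
noncomputable def optA (p : ℝ) : ℕ :=
  if (⌈1 / Real.log (1 / p)⌉₊ : ℝ) * p ^ (⌈1 / Real.log (1 / p)⌉₊ : ℕ) ≤
      (⌊1 / Real.log (1 / p)⌋₊ : ℝ) * p ^ (⌊1 / Real.log (1 / p)⌋₊ : ℕ)
  then ⌊1 / Real.log (1 / p)⌋₊ else ⌈1 / Real.log (1 / p)⌉₊

/-!
Enumerate the candidate `r`-matchings `c`. On the event, some candidate is all ones, and for every
all-ones candidate the crossing graph on `Fin r` (two matching edges are adjacent when they cross)
has no independent set of size `a`, because an independent set is a cross-free submatching. The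
crossing graph reads disjoint pairs of cells off the matching, so it is distributed as `G(r, p²)`,
and "no independent set of size `a`" is an increasing event `C c` that ignores the matching cells.
Adding the candidates one at a time, the new part of the event lies in
`{c all ones} ∩ C c ∩ {no earlier candidate all ones}`. Raising the cells of `c` to one turns the
last event into a decreasing event independent of `{c all ones}`, so by the Harris inequality the
new part has probability at most `P(c all ones, no earlier one) · P(C c)`, and the first factors
sum to at most one.
-/

open ProbabilityTheory Set

section MaxCard
variable {α : Type*} [Fintype α] {P : Finset α → Prop}

lemma bddAbove_setOf_card : BddAbove {k | ∃ F : Finset α, P F ∧ F.card = k} :=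
  ⟨Fintype.card α, fun _ ⟨G, _, hG⟩ => hG ▸ G.card_le_univ⟩

lemma card_le_sSup_card {F : Finset α} (hF : P F) :
    F.card ≤ sSup {k | ∃ F, P F ∧ F.card = k} :=
  le_csSup bddAbove_setOf_card ⟨F, hF, rfl⟩

lemma exists_card_eq_of_le_sSup_card (hP : Antitone P) (h0 : P ∅) {k : ℕ}
    (hk : k ≤ sSup {k | ∃ F, P F ∧ F.card = k}) : ∃ F, P F ∧ F.card = k := by
  obtain ⟨F, hF, hFk⟩ := Nat.sSup_mem (s := {k | ∃ F, P F ∧ F.card = k}) ⟨0, ∅, h0, rfl⟩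
    bddAbove_setOf_card
  obtain ⟨G, hGF, hG⟩ := Finset.exists_subset_card_eq (hFk ▸ hk)
  exact ⟨G, hP hGF hF, hG⟩

end MaxCard

lemma IsUpperSet.monotone_indicator_one {α : Type*} [Preorder α] {U : Set α} (hU : IsUpperSet U) :
    Monotone (U.indicator (1 : α → ℝ)) := by
  intro a b hab
  by_cases ha : a ∈ U
  · simp [ha, hU hab ha]
  · simp [ha, Set.indicator_nonneg]

section Harris
variable {α : Type*} [MeasurableSpace α] [DiscreteMeasurableSpace α] [Fintype α] {μ : Measure α}

lemma measureReal_eq_sum_mul_indicator [IsFiniteMeasure μ] (S : Set α) :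
    μ.real S = ∑ a, μ.real {a} * S.indicator 1 a := by
  rw [← S.coe_toFinset, ← sum_measureReal_singleton, ← Finset.sum_filter_add_sum_filter_not
    Finset.univ (· ∈ S)]
  simp [Set.indicator_apply, Finset.sum_ite]

theorem measureReal_inter_le_mul_of_isUpperSet_of_isLowerSet [DistribLattice α]
    [IsProbabilityMeasure μ]
    (hμ : ∀ a b, μ.real {a} * μ.real {b} ≤ μ.real {a ⊓ b} * μ.real {a ⊔ b})
    {U L : Set α} (hU : IsUpperSet U) (hL : IsLowerSet L) :
    μ.real (U ∩ L) ≤ μ.real U * μ.real L := by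
  -- FKG for the increasing indicators of `U` and `Lᶜ`
  have hfkg := fkg _ _ _ (fun _ => measureReal_nonneg) (indicator_nonneg (by simp))
    (indicator_nonneg (by simp)) hU.monotone_indicator_one hL.compl.monotone_indicator_one hμ
  simp only [← measureReal_eq_sum_mul_indicator, ← Pi.mul_apply (f := U.indicator 1),
    ← inter_indicator_one] at hfkg
  rw [sum_measureReal_singleton, Finset.coe_univ, probReal_univ, one_mul,
    probReal_compl_eq_one_sub .of_discrete] at hfkg
  have hsplit := measureReal_inter_add_sdiff (μ := μ) (s := U) (.of_discrete (s := L))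
  rw [Set.sdiff_eq] at hsplit
  nlinarith

end Harris

lemma DependsOn.preimage_image_restrict {ι : Type*} {β : ι → Type*} {A : Set (∀ i, β i)}
    {s : Finset ι} (hA : DependsOn (· ∈ A) ↑s) :
    (fun f (i : s) => f i) ⁻¹' ((fun f (i : s) => f i) '' A) = A := by
  refine Subset.antisymm ?_ (subset_preimage_image _ _)
  rintro f ⟨g, hg, hgf⟩
  exact (hA fun i hi => congrFun hgf ⟨i, hi⟩).mp hg

section TrueOn
variable {ι : Type*}

def trueOn (s : Finset ι) : Set (ι → Bool) := {f | ∀ i ∈ s, f i = true}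

lemma isUpperSet_trueOn (s : Finset ι) : IsUpperSet (trueOn s) :=
  fun _ _ hfg hf i hi => Bool.le_iff_imp.1 (hfg i) (hf i hi)

lemma dependsOn_trueOn (s : Finset ι) : DependsOn (· ∈ trueOn s) ↑s :=
  fun f g hfg => by simp +contextual [trueOn, hfg]

end TrueOn

section Product
variable {ι : Type*} [Fintype ι] {ν : ι → Measure Bool} [∀ i, IsProbabilityMeasure (ν i)]

local notation "𝐏" => Measure.pi ν

lemma measureReal_pi_inter_eq_mul_of_dependsOn (s : Finset ι) {A B : Set (ι → Bool)}
    (hA : DependsOn (· ∈ A) ↑s) (hB : DependsOn (· ∈ B) (↑s)ᶜ) :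
    𝐏.real (A ∩ B) = 𝐏.real A * 𝐏.real B := by
  have hind := (iIndepFun_pi (μ := ν) (X := fun _ => id) fun _ => aemeasurable_id).indepFun_finset
    s sᶜ disjoint_compl_right fun i => measurable_pi_apply i
  rw [← Finset.coe_compl] at hB
  rw [← hA.preimage_image_restrict, ← hB.preimage_image_restrict]
  exact congrArg ENNReal.toReal (hind.measure_inter_preimage_eq_mul _ _ .of_discrete .of_discrete)
    |>.trans ENNReal.toReal_mul

lemma measureReal_pi_singleton_mul_singleton (f g : ι → Bool) :
    𝐏.real {f} * 𝐏.real {g} = 𝐏.real {f ⊓ g} * 𝐏.real {f ⊔ g} := by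
  simp only [measureReal_def, Measure.pi_singleton, ENNReal.toReal_prod, ← Finset.prod_mul_distrib]
  refine Finset.prod_congr rfl fun i _ => ?_
  simp only [Pi.inf_apply, Pi.sup_apply]
  cases f i <;> cases g i <;> simp [mul_comm]

lemma measureReal_pi_biInter_eq_prod {κ : Type*} (S : Finset κ) {s : κ → Finset ι}
    (hs : (S : Set κ).PairwiseDisjoint s) {A : κ → Set (ι → Bool)}
    (hA : ∀ k ∈ S, DependsOn (· ∈ A k) ↑(s k)) :
    𝐏.real (⋂ k ∈ S, A k) = ∏ k ∈ S, 𝐏.real (A k) := by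
  induction S using Finset.induction_on with
  | empty => simp
  | insert k S hk ih =>
    have hrest : DependsOn (· ∈ ⋂ j ∈ S, A j) (↑(s k))ᶜ := by
      intro f g hfg
      simp only [mem_iInter₂, eq_iff_iff]
      refine forall₂_congr fun j hj => eq_iff_iff.mp <| hA j (by simp [hj]) fun i hi => hfg i ?_
      have hjk : Disjoint (s j) (s k) := hs (by simp [hj]) (by simp) (ne_of_mem_of_not_mem hj hk)
      simpa using hjk.notMem_of_mem_left_finset hi
    rw [Finset.set_biInter_insert, Finset.prod_insert hk,
      measureReal_pi_inter_eq_mul_of_dependsOn (s k) (hA k (by simp)) hrest,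
      ih (hs.subset (by simp)) fun j hj => hA j (by simp [hj])]

lemma measureReal_pi_eval_preimage (i : ι) (T : Set Bool) :
    𝐏.real {f | f i ∈ T} = (ν i).real T :=
  (measurePreserving_eval ν i).measureReal_preimage MeasurableSet.of_discrete.nullMeasurableSet

lemma measureReal_pi_and_eq_true {i j : ι} (hij : i ≠ j) :
    𝐏.real {f | (f i && f j) = true} = (ν i).real {true} * (ν j).real {true} := by
  have hi : DependsOn (· ∈ {f : ι → Bool | f i ∈ ({true} : Set Bool)}) ↑({i} : Finset ι) :=
    fun f g hfg => by simp [hfg i (by simp)]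
  have hj : DependsOn (· ∈ {f : ι → Bool | f j ∈ ({true} : Set Bool)}) (↑({i} : Finset ι))ᶜ :=
    fun f g hfg => by simp [hfg j (by simp [hij.symm])]
  rw [← measureReal_pi_eval_preimage, ← measureReal_pi_eval_preimage,
    ← measureReal_pi_inter_eq_mul_of_dependsOn {i} hi hj]
  congr 1
  ext f
  simp

lemma measureReal_pi_and_eq {i j : ι} (hij : i ≠ j) {ρ : Measure Bool} [IsProbabilityMeasure ρ]
    (hρ : ρ.real {true} = (ν i).real {true} * (ν j).real {true}) (b : Bool) :
    𝐏.real {f | (f i && f j) = b} = ρ.real {b} := by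
  cases b
  · rw [show ({false} : Set Bool) = {true}ᶜ by simp, probReal_compl_eq_one_sub .of_discrete, hρ,
      ← measureReal_pi_and_eq_true hij, ← probReal_compl_eq_one_sub .of_discrete]
    congr 1
    ext f
    simp
  · exact (measureReal_pi_and_eq_true hij).trans hρ.symm

theorem measureReal_pi_preimage_and {κ : Type*} [Fintype κ] {d : κ → Bool → ι}
    (hd : Function.Injective (Function.uncurry d)) {ν' : κ → Measure Bool}
    [∀ k, IsProbabilityMeasure (ν' k)]
    (hν' : ∀ k, (ν' k).real {true} = (ν (d k true)).real {true} * (ν (d k false)).real {true})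
    (T : Set (κ → Bool)) :
    𝐏.real ((fun f k => f (d k true) && f (d k false)) ⁻¹' T) = (Measure.pi ν').real T := by
  have hdisj : ((Finset.univ : Finset κ) : Set κ).PairwiseDisjoint
      fun k => ({d k true, d k false} : Finset ι) := by
    intro k _ k' _ hkk'
    simp only [Function.onFun, Finset.disjoint_left, Finset.mem_insert, Finset.mem_singleton]
    rintro _ (rfl | rfl) (h | h) <;> exact hkk' (congrArg Prod.fst (@hd (k, _) (k', _) h))
  have hne : ∀ k, d k true ≠ d k false := fun k h => by simpa using @hd (k, true) (k, false) h
  have hfiber : ∀ t : κ → Bool, 𝐏.real ((fun f k => f (d k true) && f (d k false)) ⁻¹' {t})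
      = (Measure.pi ν').real {t} := by
    intro t
    have hpre : (fun f k => f (d k true) && f (d k false)) ⁻¹' {t}
        = ⋂ k ∈ Finset.univ, {f : ι → Bool | (f (d k true) && f (d k false)) = t k} := by
      ext f
      simp [funext_iff]
    rw [hpre, measureReal_pi_biInter_eq_prod _ hdisj fun k _ f g hfg => by
      simp [hfg (d k true) (by simp), hfg (d k false) (by simp)]]
    simp [measureReal_pi_and_eq (hne _) (hν' _), measureReal_def, ENNReal.toReal_prod]
  rw [← T.coe_toFinset, ← sum_measureReal_preimage_singleton _ (fun _ _ => .of_discrete),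
    ← sum_measureReal_singleton]
  exact Finset.sum_congr rfl fun t _ => hfiber t

lemma measureReal_pi_trueOn_inter_inter_le (s : Finset ι) {C L : Set (ι → Bool)}
    (hC : IsUpperSet C) (hCs : DependsOn (· ∈ C) (↑s)ᶜ) (hL : IsLowerSet L) :
    𝐏.real (trueOn s ∩ C ∩ L) ≤ 𝐏.real (trueOn s ∩ L) * 𝐏.real C := by
  -- raising the coordinates in `s` to `true` makes `L` independent of `trueOn s`,
  -- and changes nothing on `trueOn s`
  set raise : (ι → Bool) → ι → Bool := fun f => f ⊔ fun i => decide (i ∈ s)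
  have hraise : ∀ f ∈ trueOn s, raise f = f := fun f hf => funext fun i => by
    by_cases hi : i ∈ s <;> simp [raise, hi, hf i]
  have hsame : ∀ X ⊆ trueOn s, X ∩ L = X ∩ raise ⁻¹' L := fun X hX => by
    ext f
    simp only [mem_inter_iff, mem_preimage]
    exact and_congr_right fun hf => by rw [hraise f (hX hf)]
  have hL' : IsLowerSet (raise ⁻¹' L) := hL.preimage fun f g hfg => sup_le_sup_right hfg _
  have hL's : DependsOn (· ∈ raise ⁻¹' L) (↑s)ᶜ := fun f g hfg => by
    have : raise f = raise g := funext fun i => by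
      by_cases hi : i ∈ s
      · simp [raise, hi]
      · simp [raise, hfg i (by simpa using hi)]
    simp only [mem_preimage, this]
  have hCL's : DependsOn (· ∈ C ∩ raise ⁻¹' L) (↑s)ᶜ := fun f g hfg => by
    simp only [mem_inter_iff, hCs hfg, hL's hfg]
  calc 𝐏.real (trueOn s ∩ C ∩ L)
      = 𝐏.real (trueOn s) * 𝐏.real (C ∩ raise ⁻¹' L) := by
        rw [hsame _ inter_subset_left, inter_assoc,
          measureReal_pi_inter_eq_mul_of_dependsOn s (dependsOn_trueOn s) hCL's]
    _ ≤ 𝐏.real (trueOn s) * (𝐏.real C * 𝐏.real (raise ⁻¹' L)) :=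
        mul_le_mul_of_nonneg_left (measureReal_inter_le_mul_of_isUpperSet_of_isLowerSet
          (fun f g => (measureReal_pi_singleton_mul_singleton f g).le) hC hL') measureReal_nonneg
    _ = 𝐏.real (trueOn s ∩ L) * 𝐏.real C := by
        rw [hsame _ subset_rfl,
          measureReal_pi_inter_eq_mul_of_dependsOn s (dependsOn_trueOn s) hL's]
        ring

lemma measureReal_pi_exists_trueOn_forall_le_mul {κ : Type*} (S : Finset κ) (s : κ → Finset ι)
    {C : κ → Set (ι → Bool)} (hC : ∀ c, IsUpperSet (C c))
    (hCs : ∀ c, DependsOn (· ∈ C c) (↑(s c))ᶜ) {Q : ℝ} (hQ : ∀ c, 𝐏.real (C c) ≤ Q) :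
    𝐏.real {f | (∃ c ∈ S, f ∈ trueOn (s c)) ∧ ∀ c ∈ S, f ∈ trueOn (s c) → f ∈ C c}
      ≤ Q * 𝐏.real (⋃ c ∈ S, trueOn (s c)) := by
  induction S using Finset.induction_on with
  | empty => simp
  | insert c S hc ih =>
    set U := ⋃ c ∈ S, trueOn (s c)
    have hU : IsUpperSet U := isUpperSet_iUnion₂ fun c _ => isUpperSet_trueOn (s c)
    have hsub : {f | (∃ c' ∈ insert c S, f ∈ trueOn (s c')) ∧
          ∀ c' ∈ insert c S, f ∈ trueOn (s c') → f ∈ C c'}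
        ⊆ {f | (∃ c ∈ S, f ∈ trueOn (s c)) ∧ ∀ c ∈ S, f ∈ trueOn (s c) → f ∈ C c}
          ∪ trueOn (s c) ∩ C c ∩ Uᶜ := by
      rintro f ⟨⟨c', hc', hfc'⟩, hall⟩
      by_cases hfU : f ∈ U
      · obtain ⟨c'', hc'', hfc''⟩ := mem_iUnion₂.1 hfU
        exact .inl ⟨⟨c'', hc'', hfc''⟩, fun c₀ h₀ => hall c₀ (Finset.mem_insert_of_mem h₀)⟩
      · rcases Finset.mem_insert.1 hc' with rfl | hc'
        · exact .inr ⟨⟨hfc', hall _ (Finset.mem_insert_self _ _) hfc'⟩, hfU⟩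
        · exact absurd (mem_iUnion₂.2 ⟨c', hc', hfc'⟩) hfU
    have hnew := measureReal_pi_trueOn_inter_inter_le (ν := ν) (s c) (hC c) (hCs c) hU.compl
    have hunion : 𝐏.real (trueOn (s c) ∪ U) = 𝐏.real U + 𝐏.real (trueOn (s c) ∩ Uᶜ) := by
      rw [union_comm, ← union_sdiff_self, measureReal_union disjoint_sdiff_right .of_discrete
        (measure_ne_top _ _) (measure_ne_top _ _), Set.sdiff_eq]
    calc _ ≤ 𝐏.real {f | (∃ c ∈ S, f ∈ trueOn (s c)) ∧ ∀ c ∈ S, f ∈ trueOn (s c) → f ∈ C c}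
          + 𝐏.real (trueOn (s c) ∩ C c ∩ Uᶜ) :=
          (measureReal_mono hsub).trans (measureReal_union_le _ _)
      _ ≤ Q * 𝐏.real U + 𝐏.real (trueOn (s c) ∩ Uᶜ) * Q :=
          add_le_add ih (hnew.trans (mul_le_mul_of_nonneg_left (hQ c) measureReal_nonneg))
      _ = Q * 𝐏.real (⋃ c' ∈ insert c S, trueOn (s c')) := by
          rw [Finset.set_biUnion_insert, hunion]
          ring

theorem measureReal_pi_exists_trueOn_forall_le {κ : Type*} [Fintype κ] (s : κ → Finset ι)
    {C : κ → Set (ι → Bool)} (hC : ∀ c, IsUpperSet (C c))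
    (hCs : ∀ c, DependsOn (· ∈ C c) (↑(s c))ᶜ) {Q : ℝ} (hQ0 : 0 ≤ Q)
    (hQ : ∀ c, 𝐏.real (C c) ≤ Q) :
    𝐏.real {f | (∃ c, f ∈ trueOn (s c)) ∧ ∀ c, f ∈ trueOn (s c) → f ∈ C c} ≤ Q := by
  have := measureReal_pi_exists_trueOn_forall_le_mul Finset.univ s hC hCs hQ
  simp only [Finset.mem_univ, true_and, forall_const] at this
  exact this.trans (mul_le_of_le_one_right hQ0 measureReal_le_one)

end Product

section IndepSet
variable {m : ℕ}

lemma isIndepSet_antitone (g : {e : Fin m × Fin m // e.1 < e.2} → Bool) :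
    Antitone (IsIndepSet g) :=
  fun _ _ hBA hA i hi j hj hij => hA i (hBA hi) j (hBA hj) hij

lemma isIndepSet_empty (g : {e : Fin m × Fin m // e.1 < e.2} → Bool) : IsIndepSet g ∅ := by
  simp [IsIndepSet]

lemma indepNum_anti {g g' : {e : Fin m × Fin m // e.1 < e.2} → Bool} (h : g ≤ g') :
    indepNum g' ≤ indepNum g := by
  obtain ⟨A, hA, hcard⟩ :=
    exists_card_eq_of_le_sSup_card (isIndepSet_antitone g') (isIndepSet_empty g') le_rfl
  rw [indepNum, ← hcard]
  refine card_le_sSup_card fun i hi j hj hij => ?_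
  have := h ⟨(i, j), hij⟩
  rw [hA i hi j hj hij] at this
  exact Bool.eq_false_iff.2 fun hg => Bool.false_ne_true (Bool.le_iff_imp.1 this hg)

end IndepSet

section Matching
variable {n r : ℕ}

/-- Row `c.1 k` is matched to column `c.2 k`. -/
abbrev MatchingCandidate (n r : ℕ) := (Fin r ↪ Fin n) × (Fin r ↪ Fin n)

def matchingCells (c : MatchingCandidate n r) : Finset (Fin n × Fin n) :=
  Finset.univ.image fun k => (c.1 k, c.2 k)

/-- The two cells where the matching edges `i < j` cross: `(x i, y j)` for `true` and `(x j, y i)`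
for `false`, writing `c = (x, y)`. -/
def crossCell (c : MatchingCandidate n r) (e : {e : Fin r × Fin r // e.1 < e.2}) (b : Bool) :
    Fin n × Fin n :=
  Prod.map c.1 c.2 (bif b then e.1 else e.1.swap)

def crossGraph (f : Fin n × Fin n → Bool) (c : MatchingCandidate n r) :
    {e : Fin r × Fin r // e.1 < e.2} → Bool :=
  fun e => f (crossCell c e true) && f (crossCell c e false)

lemma crossCell_injective (c : MatchingCandidate n r) :
    Function.Injective (Function.uncurry (crossCell c)) := by
  rintro ⟨⟨⟨i, j⟩, hij : i < j⟩, b⟩ ⟨⟨⟨i', j'⟩, hij' : i' < j'⟩, b'⟩ h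
  have h' := (c.1.injective.prodMap c.2.injective) h
  cases b <;> cases b' <;> simp_all [Function.uncurry] <;> omega

lemma crossCell_notMem_matchingCells (c : MatchingCandidate n r) (e) (b : Bool) :
    crossCell c e b ∉ matchingCells c := by
  obtain ⟨⟨i, j⟩, hij : i < j⟩ := e
  cases b <;> simp [crossCell, matchingCells, hij.ne, hij.ne']

lemma exists_trueOn_matchingCells_of_le_matchNum {f : Fin n × Fin n → Bool}
    (h : r ≤ matchNum f) : ∃ c : MatchingCandidate n r, f ∈ trueOn (matchingCells c) := by
  obtain ⟨F, hF, hcard⟩ := exists_card_eq_of_le_sSup_card (P := IsMatchingIn f)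
    (fun _ _ hGF hF => ⟨fun e he => hF.1 e (hGF he),
      fun e he e' he' => hF.2 e (hGF he) e' (hGF he')⟩)
    ⟨by simp, by simp⟩ h
  set e := (F.equivFinOfCardEq hcard).symm
  have hne : ∀ k k', k ≠ k' → (e k).1.1 ≠ (e k').1.1 ∧ (e k).1.2 ≠ (e k').1.2 :=
    fun k k' hkk' => hF.2 _ (e k).2 _ (e k').2 fun h => hkk' (e.injective (Subtype.ext h))
  refine ⟨(⟨fun k => (e k).1.1, fun k k' h => by_contra fun hkk' => (hne k k' hkk').1 h⟩,
    ⟨fun k => (e k).1.2, fun k k' h => by_contra fun hkk' => (hne k k' hkk').2 h⟩), ?_⟩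
  simp only [trueOn, matchingCells, Finset.mem_image, Finset.mem_univ, true_and,
    forall_exists_index]
  rintro _ k rfl
  exact hF.1 _ (e k).2

lemma indepNum_crossGraph_lt_of_crossFreeMatchNum_lt {f : Fin n × Fin n → Bool}
    {c : MatchingCandidate n r} {a : ℕ} (hf : f ∈ trueOn (matchingCells c))
    (h : crossFreeMatchNum f < a) : indepNum (crossGraph f c) < a := by
  by_contra! ha
  obtain ⟨A, hA, rfl⟩ :=
    exists_card_eq_of_le_sSup_card (isIndepSet_antitone _) (isIndepSet_empty _) ha
  have hinj : Function.Injective fun k => (c.1 k, c.2 k) :=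
    fun k k' h => c.1.injective (congrArg Prod.fst h)
  refine h.not_ge (Finset.card_image_of_injective A hinj ▸ card_le_sSup_card ⟨⟨?_, ?_⟩, ?_⟩)
  · simp only [Finset.mem_image]
    rintro _ ⟨k, -, rfl⟩
    exact hf _ (Finset.mem_image_of_mem _ (Finset.mem_univ k))
  · simp only [Finset.mem_image]
    rintro _ ⟨k, -, rfl⟩ _ ⟨k', -, rfl⟩ hkk'
    have hkk' : k ≠ k' := fun h => hkk' (h ▸ rfl)
    exact ⟨c.1.injective.ne hkk', c.2.injective.ne hkk'⟩
  · simp only [Finset.mem_image]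
    rintro _ ⟨k, hk, rfl⟩ _ ⟨k', hk', rfl⟩ hkk'
    have hkk' : k ≠ k' := fun h => hkk' (h ▸ rfl)
    rcases hkk'.lt_or_gt with hlt | hlt
    · exact Bool.and_eq_false_iff.1 (hA k hk k' hk' hlt)
    · exact (Bool.and_eq_false_iff.1 (hA k' hk' k hk hlt)).symm

lemma isUpperSet_indepNum_crossGraph_lt (c : MatchingCandidate n r) (a : ℕ) :
    IsUpperSet {f : Fin n × Fin n → Bool | indepNum (crossGraph f c) < a} :=
  fun _ _ hff' hf => (indepNum_anti fun _ => inf_le_inf (hff' _) (hff' _)).trans_lt hf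

lemma dependsOn_indepNum_crossGraph_lt (c : MatchingCandidate n r) (a : ℕ) :
    DependsOn (· ∈ {f : Fin n × Fin n → Bool | indepNum (crossGraph f c) < a})
      (↑(matchingCells c))ᶜ := fun f g hfg => by
  have : crossGraph f c = crossGraph g c := funext fun e => by
    have hcross : ∀ b, crossCell c e b ∈ (↑(matchingCells c) : Set _)ᶜ := fun b => by
      simpa using crossCell_notMem_matchingCells c e b
    simp only [crossGraph, hfg _ (hcross true), hfg _ (hcross false)]
  simp only [Set.mem_ofPred_eq, this]

end Matching

instance rbf.isProbabilityMeasure (n : ℕ) (p : ℝ) : IsProbabilityMeasure (rbf n p) := by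
  unfold rbf; infer_instance

instance erg.isProbabilityMeasure (m : ℕ) (q : ℝ) : IsProbabilityMeasure (erg m q) := by
  unfold erg; infer_instance

lemma bern_real_true {p : ℝ} (hp0 : 0 ≤ p) (hp1 : p ≤ 1) : (bern p).real {true} = p := by
  simp [bern, measureReal_def, hp1, PMF.bernoulli_apply, hp0]

lemma rbf_real_indepNum_crossGraph_lt {n r : ℕ} (c : MatchingCandidate n r) (a : ℕ) {p : ℝ}
    (hp0 : 0 ≤ p) (hp1 : p ≤ 1) :
    (rbf n p).real {f | indepNum (crossGraph f c) < a}
      = (erg r (p ^ 2)).real {g | indepNum g < a} :=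
  measureReal_pi_preimage_and (ν := fun _ => bern p) (ν' := fun _ => bern (p ^ 2))
    (crossCell_injective c) (fun _ => by
      rw [bern_real_true hp0 hp1, bern_real_true (sq_nonneg p) (pow_le_one₀ hp0 hp1), sq])
    {g | indepNum g < a}

theorem stmt19_general (n r a : ℕ)
    (p : ℝ) (hp0 : 0 ≤ p) (hp1 : p ≤ 1) :
    rbf n p {f | crossFreeMatchNum f < a ∧ r ≤ matchNum f} ≤
      erg r (p ^ 2) {g | indepNum g < a} := by
  have hbound := measureReal_pi_exists_trueOn_forall_le
    (κ := MatchingCandidate n r) matchingCells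
    (isUpperSet_indepNum_crossGraph_lt · a) (dependsOn_indepNum_crossGraph_lt · a)
    measureReal_nonneg fun c => (rbf_real_indepNum_crossGraph_lt c a hp0 hp1).le
  rw [← ofReal_measureReal, ← ofReal_measureReal]
  refine ENNReal.ofReal_le_ofReal ((measureReal_mono fun f hf => ?_).trans hbound)
  exact ⟨exists_trueOn_matchingCells_of_le_matchNum hf.2,
    fun c hc => indepNum_crossGraph_lt_of_crossFreeMatchNum_lt hc hf.1⟩

/-- For all positive integers `n, r, a` and `p ∈ [0,1]`, the probability
that `H_f` has no cross-free matching of size `a` yet has a matching of size at least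
`r` is at most the probability that `G_{r,p²}` has no independent set of size `a`. -/
theorem stmt19 (n r a : ℕ) (hn : 0 < n) (hr : 0 < r) (ha : 0 < a)
    (p : ℝ) (hp0 : 0 ≤ p) (hp1 : p ≤ 1) :
    rbf n p {f | crossFreeMatchNum f < a ∧ r ≤ matchNum f} ≤
      erg r (p ^ 2) {g | indepNum g < a} :=
  stmt19_general n r a p hp0 hp1
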